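/- Let Σ₀ ⊆ Σ be the subset of implications of Σ whose left-hand sides are singletons, and let clo₀ = clo_{Σ₀}. Suppose Σ' ⊇ Σ is a direct basis equivalent to Σ (clo_{Σ'} = clo_Σ and clo_{Σ'}(X) = Π_{Σ'}(X) for all X) and that for each implication (A → B) ∈ Σ' \ Σ there exists (A' → B) ∈ Σ with A' ⊆ clo₀(A) or B ⊆ clo₀(A). Then for all X ⊆ U, clo_Σ(X) = Π_Σ(clo₀(X)). -/
import Mathlib


variable {α : Type*}

/-- The pass operator: `pass S X = X ∪ ⋃ {B | (A → B) ∈ S, A ⊆ X}`. -/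
def pass (S : Set (Set α × Set α)) (X : Set α) : Set α :=
  X ∪ {b | ∃ p ∈ S, p.1 ⊆ X ∧ b ∈ p.2}
/-- `clo S X` : the smallest set containing `X` satisfying every implication of `S`. -/
def clo (S : Set (Set α × Set α)) (X : Set α) : Set α :=
  ⋂₀ {Y | X ⊆ Y ∧ ∀ p ∈ S, p.1 ⊆ Y → p.2 ⊆ Y}

lemma subset_clo (S : Set (Set α × Set α)) (X : Set α) : X ⊆ clo S X := by
  intro x hx
  intro Y hY
  exact hY.1 hx

lemma clo_min {S : Set (Set α × Set α)} {X Y : Set α} (hXY : X ⊆ Y)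
    (hcl : ∀ p ∈ S, p.1 ⊆ Y → p.2 ⊆ Y) : clo S X ⊆ Y :=
  Set.sInter_subset_of_mem ⟨hXY, hcl⟩

lemma clo_closed {S : Set (Set α × Set α)} {X : Set α} :
    ∀ p ∈ S, p.1 ⊆ clo S X → p.2 ⊆ clo S X := by
  intro p hp hsub b hb Y hY
  exact hY.2 p hp (fun a ha => hsub ha Y hY) hb

lemma clo_mono {S : Set (Set α × Set α)} {X Y : Set α} (h : X ⊆ Y) :
    clo S X ⊆ clo S Y :=
  clo_min (h.trans (subset_clo S Y)) clo_closed

lemma clo_idem (S : Set (Set α × Set α)) (X : Set α) :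
    clo S (clo S X) = clo S X :=
  Set.Subset.antisymm (clo_min le_rfl clo_closed) (subset_clo _ _)

lemma clo_le_clo {S T : Set (Set α × Set α)} (h : S ⊆ T) (X : Set α) :
    clo S X ⊆ clo T X :=
  clo_min (subset_clo T X) (fun p hp => clo_closed p (h hp))

theorem clo_eq_pass_clo_zero [Fintype α] (S S' : Set (Set α × Set α))
    (hS : S.Finite) (hS' : S'.Finite)
    (S₀ : Set (Set α × Set α)) (hS₀ : S₀ = {p ∈ S | ∃ a : α, p.1 = {a}})
    (hsub : S ⊆ S')
    (hequiv : ∀ X : Set α, clo S' X = clo S X)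
    (hdirect : ∀ X : Set α, clo S' X = pass S' X)
    (hcover : ∀ p ∈ S' \ S,
      (∃ A' : Set α, (A', p.2) ∈ S ∧ A' ⊆ clo S₀ p.1) ∨ p.2 ⊆ clo S₀ p.1) :
    ∀ X : Set α, clo S X = pass S (clo S₀ X) := by
  intro X
  have hS₀sub : S₀ ⊆ S := by
    intro p hp; rw [hS₀] at hp; exact hp.1
  have h0S : clo S₀ X ⊆ clo S X := clo_le_clo hS₀sub X
  apply Set.Subset.antisymm
  · -- clo S X = clo S' (clo S₀ X) = pass S' (clo S₀ X) ⊆ pass S (clo S₀ X)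
    have h1 : clo S X ⊆ clo S (clo S₀ X) := clo_mono (subset_clo S₀ X)
    have h2 : clo S (clo S₀ X) = pass S' (clo S₀ X) := by
      rw [← hequiv, hdirect]
    intro b hb
    have hb' : b ∈ pass S' (clo S₀ X) := h2 ▸ h1 hb
    rcases hb' with hb' | ⟨p, hpS', hpsub, hbp⟩
    · exact Or.inl hb'
    · by_cases hpS : p ∈ S
      · exact Or.inr ⟨p, hpS, hpsub, hbp⟩
      · rcases hcover p ⟨hpS', hpS⟩ with ⟨A', hA'S, hA'⟩ | hB
        · refine Or.inr ⟨(A', p.2), hA'S, ?_, hbp⟩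
          calc A' ⊆ clo S₀ p.1 := hA'
            _ ⊆ clo S₀ (clo S₀ X) := clo_mono hpsub
            _ = clo S₀ X := clo_idem _ _
        · left
          have : p.2 ⊆ clo S₀ X := by
            calc p.2 ⊆ clo S₀ p.1 := hB
              _ ⊆ clo S₀ (clo S₀ X) := clo_mono hpsub
              _ = clo S₀ X := clo_idem _ _
          exact this hbp
  · -- pass S (clo S₀ X) ⊆ clo S X
    rintro b (hb | ⟨p, hpS, hpsub, hbp⟩)
    · exact h0S hb
    · exact clo_closed p hpS (hpsub.trans h0S) hbp
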